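/- arXiv:1012.0540 — 2 statements merged into one kernel-verified Lean document; each statement's English description precedes it below -/
import Mathlib

section
/- Let G be a connected solvable subgroup of GL_n(ℂ). Then there exists a complete flag 0 = V_0 ≤ V_1 ≤ ... ≤ V_n = ℂ^n of G-invariant subspaces with dim V_j = j, and for any such flag the commutator subgroup G' acts trivially on each quotient V_{j+1}/V_j. -/
/-!
Lie–Kolchin, by induction on the derived length of a connected solvable group `K` acting on a
finite-dimensional complex space `V`. The commutator subgroup `[K, K]` is connected, so by induction
it has a common eigenvector `v`, with a continuous eigencharacter `χ`. For `h ∈ [K, K]` the map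
`g ↦ χ (g⁻¹ h g)` is continuous on the connected group `K` with values in the finite set of
eigenvalues of `h`, hence constant; so `h` acts as the scalar `χ h` on the span `W` of the orbit
`K • v`. Determinants on `W` kill commutators, whence `χ h ^ dim W = 1`, and connectedness of
`[K, K]` forces `χ = 1`. Thus `K` acts on `W` by commuting operators, which share an eigenvector.

Common eigenvectors of `G` on the quotients `V ⧸ U` build the flag. On each one-dimensional
quotient `V (j + 1) ⧸ V j`, `G` acts through the commutative monoid of scalars, so `G'` acts
trivially.
-/

open Module Set
open scoped commutatorElement

theorem Subgroup.connectedSpace_closure {G : Type*} [Group G] [TopologicalSpace G]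
    [IsTopologicalGroup G] {S : Set G} (hS : IsPreconnected S) (h1 : 1 ∈ S) :
    ConnectedSpace (closure S) := by
  have hS' : IsPreconnected (((↑) : closure S → G) ⁻¹' S) := by
    refine Topology.IsInducing.subtypeVal.isPreconnected_image.mp ?_
    convert hS using 1
    exact image_preimage_eq_of_subset fun x hx => ⟨⟨x, subset_closure hx⟩, rfl⟩
  have htop : (⊤ : Subgroup (closure S)) ≤ connectedComponentOfOne (closure S) := by
    rw [← closure_closure_coe_preimage, closure_le]
    exact hS'.subset_connectedComponent (x := 1) h1
  exact connectedSpace_iff_connectedComponent.mpr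
    ⟨1, eq_univ_of_forall fun x => htop (mem_top x)⟩

instance connectedSpace_commutator (G : Type*) [Group G] [TopologicalSpace G]
    [IsTopologicalGroup G] [ConnectedSpace G] : ConnectedSpace (commutator G) := by
  have hrange : commutatorSet G = range fun p : G × G => ⁅p.1, p.2⁆ := by
    ext; simp [commutatorSet, eq_comm]
  rw [commutator_eq_closure]
  refine Subgroup.connectedSpace_closure ?_ ⟨1, 1, commutatorElement_self 1⟩
  rw [hrange]
  exact isPreconnected_range (by simp only [commutatorElement_def]; fun_prop)

theorem map_subtype_derivedSeries_commutator (G : Type*) [Group G] (d : ℕ) :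
    (derivedSeries (commutator G) d).map (commutator G).subtype = derivedSeries G (d + 1) := by
  induction d with
  | zero => rw [derivedSeries_zero, ← MonoidHom.range_eq_map, Subgroup.range_subtype,
      derivedSeries_one]
  | succ d ih => rw [derivedSeries_succ, Subgroup.map_commutator, ih, derivedSeries_succ G (d + 1)]

theorem derivedSeries_commutator_eq_bot {G : Type*} [Group G] {d : ℕ}
    (h : derivedSeries G (d + 1) = ⊥) : derivedSeries (commutator G) d = ⊥ := by
  rwa [← map_subtype_derivedSeries_commutator,
    Subgroup.map_eq_bot_iff_of_injective _ (Subgroup.subtype_injective _)] at h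

theorem MonoidHom.apply_eq_one_of_mem_commutator {G M : Type*} [Group G] [Monoid M]
    (f : G →* M) (hf : ∀ a b, Commute (f a) (f b)) {g : G} (hg : g ∈ commutator G) : f g = 1 := by
  have : commutator G ≤ f.toHomUnits.ker := by
    rw [commutator_eq_closure, Subgroup.closure_le]
    rintro _ ⟨a, b, rfl⟩
    rw [SetLike.mem_coe, MonoidHom.mem_ker, map_commutatorElement,
      commutatorElement_eq_one_iff_commute, ← Commute.units_val_iff]
    exact hf a b
  simpa [Units.ext_iff] using this hg

theorem Module.End.exists_common_eigenvector_of_commute {k V ι : Type*} [Field k] [IsAlgClosed k]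
    [AddCommGroup V] [Module k V] [FiniteDimensional k V] [Nontrivial V] (f : ι → End k V)
    (hf : ∀ i j, Commute (f i) (f j)) : ∃ v ≠ 0, ∀ i, ∃ c : k, f i v = c • v := by
  obtain ⟨W, ⟨hW0, hWf⟩, hWmin⟩ := wellFounded_lt.has_min
    {W : Submodule k V | W ≠ ⊥ ∧ ∀ i, W ≤ W.comap (f i)} ⟨⊤, top_ne_bot, fun _ => le_top⟩
  -- by minimality of `W`, each eigenspace of `f i` on `W` is all of `W`
  have hscalar : ∀ i, ∃ c, W ≤ (f i).eigenspace c := by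
    intro i
    have : Nontrivial W := Submodule.nontrivial_iff_ne_bot.mpr hW0
    obtain ⟨c, hc⟩ := exists_eigenvalue ((f i).restrict (hWf i))
    obtain ⟨⟨w, hwW⟩, hw⟩ := hc.exists_hasEigenvector
    refine ⟨c, by_contra fun hle => hWmin (W ⊓ (f i).eigenspace c) ⟨?_, fun j => ?_⟩
      (inf_lt_left.mpr hle)⟩
    · refine (Submodule.ne_bot_iff _).mpr ⟨w, ⟨hwW, ?_⟩, by simpa using hw.2⟩
      exact mem_eigenspace_iff.mpr (congrArg Subtype.val hw.apply_eq_smul)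
    · rintro x ⟨hxW, hx⟩
      refine ⟨hWf j hxW, mem_eigenspace_iff.mpr ?_⟩
      rw [← End.mul_apply, (hf i j).eq, End.mul_apply, mem_eigenspace_iff.mp hx,
        map_smul]
  obtain ⟨v, hvW, hv0⟩ := Submodule.exists_mem_ne_zero_of_ne_bot hW0
  exact ⟨v, hv0, fun i => (hscalar i).imp fun c hc => mem_eigenspace_iff.mp (hc hvW)⟩

theorem Module.End.commute_of_finrank_eq_one {k M : Type*} [Field k] [AddCommGroup M] [Module k M]
    (h : finrank k M = 1) (f g : End k M) : Commute f g := by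
  obtain ⟨a, rfl, -⟩ := LinearMap.existsUnique_eq_smul_id_of_finrank_eq_one h f
  obtain ⟨b, rfl, -⟩ := LinearMap.existsUnique_eq_smul_id_of_finrank_eq_one h g
  ext x
  simp [smul_smul, mul_comm]

theorem Submodule.exists_monotone_flag {k V : Type*} [DivisionRing k] [AddCommGroup V]
    [Module k V] (P : Submodule k V → Prop) (hbot : P ⊥)
    (hstep : ∀ U, P U → U ≠ ⊤ → ∃ U', P U' ∧ U ≤ U' ∧ finrank k U' = finrank k U + 1)
    {n : ℕ} (hn : finrank k V = n) :
    ∃ F : Fin (n + 1) → Submodule k V, Monotone F ∧ (∀ j, finrank k (F j) = j) ∧ ∀ j, P (F j) := by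
  have hext : ∀ U : Submodule k V, ∃ U', U ≤ U' ∧
      (P U → U ≠ ⊤ → P U' ∧ finrank k U' = finrank k U + 1) := by
    intro U
    by_cases h : P U ∧ U ≠ ⊤
    · obtain ⟨U', hP, hle, hr⟩ := hstep U h.1 h.2
      exact ⟨U', hle, fun _ _ => ⟨hP, hr⟩⟩
    · exact ⟨U, le_rfl, fun hP hU => absurd ⟨hP, hU⟩ h⟩
  choose f hle hf using hext
  have hflag : ∀ j ≤ n, P (f^[j] ⊥) ∧ finrank k (f^[j] ⊥) = j := by
    intro j hj
    induction j with
    | zero => exact ⟨hbot, finrank_bot k V⟩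
    | succ j ih =>
      obtain ⟨hP, hr⟩ := ih (by omega)
      have hne : f^[j] ⊥ ≠ ⊤ := fun h => by rw [h, finrank_top] at hr; omega
      obtain ⟨hP', hr'⟩ := hf _ hP hne
      rw [Function.iterate_succ_apply']
      exact ⟨hP', by rw [hr', hr]⟩
  have hmono : Monotone fun j => f^[j] ⊥ :=
    monotone_nat_of_le_succ fun j => by rw [Function.iterate_succ_apply']; exact hle _
  exact ⟨fun j => f^[j] ⊥, fun i j hij => hmono hij, fun j => (hflag j j.is_le).2,
    fun j => (hflag j j.is_le).1⟩

namespace Representation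

section Topology

-- Phrased through linear functionals so that no topology on `V` is needed; for
-- finite-dimensional `V` it says that `ρ` is continuous.
def ContinuousMatrixCoeffs {k K V : Type*} [CommSemiring k] [TopologicalSpace k] [Monoid K]
    [TopologicalSpace K] [AddCommMonoid V] [Module k V] (ρ : Representation k K V) : Prop :=
  ∀ (v : V) (φ : Dual k V), Continuous fun g => φ (ρ g v)

variable {k K V : Type*} [Field k] [TopologicalSpace k] [Group K] [TopologicalSpace K]
  [AddCommGroup V] [Module k V] {ρ : Representation k K V}

theorem ContinuousMatrixCoeffs.comp_subtype (hρ : ρ.ContinuousMatrixCoeffs) (H : Subgroup K) :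
    ContinuousMatrixCoeffs (ρ.comp H.subtype) :=
  fun v φ => (hρ v φ).comp continuous_subtype_val

theorem ContinuousMatrixCoeffs.quotient (hρ : ρ.ContinuousMatrixCoeffs) (U : Submodule k V)
    (hU : ∀ g, U ≤ U.comap (ρ g)) : (ρ.quotient U hU).ContinuousMatrixCoeffs := by
  intro x φ
  obtain ⟨v, rfl⟩ := U.mkQ_surjective x
  exact hρ v (φ ∘ₗ U.mkQ)

end Topology

section Commutator

variable {k K V : Type*} [Field k] [Group K] [AddCommGroup V] [Module k V]
  (ρ : Representation k K V)

theorem pow_finrank_eq_one_of_eq_smul_one {h : K} (hh : h ∈ commutator K) {c : k}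
    (hc : ρ h = c • 1) : c ^ finrank k V = 1 := by
  have := (LinearMap.det.comp ρ).apply_eq_one_of_mem_commutator (fun a b => mul_comm _ _) hh
  rwa [MonoidHom.comp_apply, hc, LinearMap.det_smul, map_one, mul_one] at this

theorem sub_mem_of_mem_commutator {U U' : Submodule k V} (hU : ∀ g, U ≤ U.comap (ρ g))
    (hU' : ∀ g, U' ≤ U'.comap (ρ g)) (hle : U ≤ U') (hr : finrank k U' = finrank k U + 1)
    {g : K} (hg : g ∈ commutator K) {u : V} (hu : u ∈ U') : ρ g u - u ∈ U := by
  have : FiniteDimensional k U' := Module.finite_of_finrank_pos (by omega)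
  set N := U.comap U'.subtype
  set σ := (ρ.subrepresentation U' hU').quotient N fun g x hx => hU g hx
  have hQ : finrank k (U' ⧸ N) = 1 := by
    have := N.finrank_quotient_add_finrank
    rw [(Submodule.comapSubtypeEquivOfLe hle).finrank_eq] at this
    omega
  have hσ : σ g = 1 :=
    σ.apply_eq_one_of_mem_commutator (fun _ _ => Module.End.commute_of_finrank_eq_one hQ _ _) hg
  have hfix : (Submodule.Quotient.mk ⟨ρ g u, hU' g hu⟩ : U' ⧸ N) = Submodule.Quotient.mk ⟨u, hu⟩ :=
    congrArg (· (N.mkQ ⟨u, hu⟩)) hσ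
  exact (Submodule.Quotient.eq N).mp hfix

end Commutator

section CommonEigenvector

variable {k K V : Type*} [Field k] [TopologicalSpace k] [T1Space k] [Group K] [TopologicalSpace K]
  [IsTopologicalGroup K] [ConnectedSpace K] [AddCommGroup V] [Module k V] [FiniteDimensional k V]
  (ρ : Representation k K V)

theorem apply_apply_eq_smul_of_mem_normal {N : Subgroup K} [hN : N.Normal] {v : V} (hv : v ≠ 0)
    {χ : K → k} (hχ : Continuous χ) (hvN : ∀ h ∈ N, ρ h v = χ h • v) {h : K} (hh : h ∈ N)
    (g : K) : ρ h (ρ g v) = χ h • ρ g v := by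
  have hconj : ∀ x, ρ h (ρ x v) = χ (x⁻¹ * h * x) • ρ x v := by
    intro x
    rw [← Module.End.mul_apply, ← map_mul, show h * x = x * (x⁻¹ * h * x) by group, map_mul,
      Module.End.mul_apply, hvN _ (hN.conj_mem' h hh x), map_smul]
  have hev : MapsTo (fun x => χ (x⁻¹ * h * x)) univ {μ | End.HasEigenvalue (ρ h) μ} :=
    fun x _ => End.hasEigenvalue_of_hasEigenvector
      ⟨End.mem_eigenspace_iff.mpr (hconj x), (map_ne_zero_iff _ (ρ.apply_bijective x).1).mpr hv⟩
  -- `x ↦ χ (x⁻¹ h x)` is continuous with values among the finitely many eigenvalues of `ρ h`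
  have hconst := isPreconnected_univ.constant_of_mapsTo (End.finite_hasEigenvalue (ρ h)).isDiscrete
    (by fun_prop : Continuous fun x => χ (x⁻¹ * h * x)).continuousOn hev (mem_univ g) (mem_univ 1)
  rw [hconj, hconst]
  simp

theorem exists_common_eigenvector_of_commutator [IsAlgClosed k] (hρ : ρ.ContinuousMatrixCoeffs)
    {v : V} (hv : v ≠ 0) (hvH : ∀ h ∈ commutator K, ∃ c : k, ρ h v = c • v) :
    ∃ w ≠ 0, ∀ g, ∃ c : k, ρ g w = c • w := by
  classical
  obtain ⟨φ, hφ⟩ := Projective.exists_dual_eq_one k hv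
  set χ : K → k := fun g => φ (ρ g v)
  have hχv : ∀ h ∈ commutator K, ρ h v = χ h • v := by
    intro h hh
    obtain ⟨c, hc⟩ := hvH h hh
    simp [χ, hc, hφ]
  set W := Submodule.span k (range fun g => ρ g v)
  have hW : ∀ g, W ≤ W.comap (ρ g) := by
    refine fun g => Submodule.span_le.mpr (range_subset_iff.mpr fun g' => ?_)
    show ρ g (ρ g' v) ∈ W
    rw [← Module.End.mul_apply, ← map_mul]
    exact Submodule.subset_span ⟨_, rfl⟩
  set σ := ρ.subrepresentation W hW
  have hσ : ∀ h ∈ commutator K, σ h = χ h • 1 := by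
    intro h hh
    have hWeig : W ≤ End.eigenspace (ρ h) (χ h) := Submodule.span_le.mpr <| range_subset_iff.mpr
      fun g => End.mem_eigenspace_iff.mpr
        (ρ.apply_apply_eq_smul_of_mem_normal hv (hρ v φ) hχv hh g)
    ext ⟨w, hw⟩
    simpa [σ] using Module.End.mem_eigenspace_iff.mp (hWeig hw)
  have hvW : v ∈ W := Submodule.subset_span ⟨1, by simp⟩
  have : Nontrivial W :=
    Submodule.nontrivial_iff_ne_bot.mpr ((Submodule.ne_bot_iff _).mpr ⟨v, hvW, hv⟩)
  -- on the connected group `[K, K]`, `χ` is continuous with values in the roots of unity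
  have hχ1 : ∀ h ∈ commutator K, χ h = 1 := by
    have hroots : MapsTo (fun h : commutator K => χ h) univ
        (Polynomial.nthRoots (finrank k W) (1 : k)).toFinset := fun h _ => by
      simpa [Polynomial.mem_nthRoots finrank_pos] using
        σ.pow_finrank_eq_one_of_eq_smul_one h.2 (hσ h h.2)
    intro h hh
    simpa [χ, hφ] using isPreconnected_univ.constant_of_mapsTo (Finset.finite_toSet _).isDiscrete
      ((hρ v φ).comp continuous_subtype_val).continuousOn hroots (mem_univ ⟨h, hh⟩) (mem_univ 1)
  have hcomm : ∀ x y, Commute (σ x) (σ y) := by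
    intro x y
    have hxy : ⁅x, y⁆ ∈ commutator K :=
      Subgroup.commutator_mem_commutator (Subgroup.mem_top x) (Subgroup.mem_top y)
    calc σ x * σ y = σ (⁅x, y⁆ * (y * x)) := by rw [← map_mul]; congr 1; group
      _ = σ y * σ x := by rw [map_mul, hσ _ hxy, hχ1 _ hxy, one_smul, one_mul, map_mul]
  obtain ⟨w, hw0, hw⟩ := Module.End.exists_common_eigenvector_of_commute σ hcomm
  exact ⟨w, by simpa using hw0, fun g => (hw g).imp fun c hc => congrArg Subtype.val hc⟩

end CommonEigenvector

section LieKolchin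

variable {k K V : Type*} [Field k] [TopologicalSpace k] [T1Space k] [IsAlgClosed k] [Group K]
  [TopologicalSpace K] [IsTopologicalGroup K] [ConnectedSpace K] [AddCommGroup V] [Module k V]
  [FiniteDimensional k V] {ρ : Representation k K V}

theorem exists_common_eigenvector_of_derivedSeries_eq_bot [Nontrivial V]
    (hρ : ρ.ContinuousMatrixCoeffs) {d : ℕ} (hd : derivedSeries K d = ⊥) :
    ∃ v ≠ 0, ∀ g, ∃ c : k, ρ g v = c • v := by
  induction d generalizing K with
  | zero =>
    obtain ⟨v, hv⟩ := exists_ne (0 : V)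
    refine ⟨v, hv, fun g => ⟨1, ?_⟩⟩
    have hg : g ∈ (⊥ : Subgroup K) := by rw [← hd, derivedSeries_zero]; exact Subgroup.mem_top g
    rw [Subgroup.mem_bot.mp hg, map_one, one_smul, Module.End.one_apply]
  | succ d ih =>
    obtain ⟨v, hv, hvH⟩ := ih (hρ.comp_subtype (commutator K)) (derivedSeries_commutator_eq_bot hd)
    exact ρ.exists_common_eigenvector_of_commutator hρ hv fun h hh => hvH ⟨h, hh⟩

theorem exists_common_eigenvector [Nontrivial V] [Group.IsSolvable K]
    (hρ : ρ.ContinuousMatrixCoeffs) :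
    ∃ v ≠ 0, ∀ g, ∃ c : k, ρ g v = c • v :=
  let ⟨_, hd⟩ := Group.IsSolvable.solvable (G := K)
  exists_common_eigenvector_of_derivedSeries_eq_bot hρ hd

theorem exists_invariant_finrank_succ [Group.IsSolvable K] (hρ : ρ.ContinuousMatrixCoeffs)
    {U : Submodule k V} (hU : ∀ g, U ≤ U.comap (ρ g)) (hUtop : U ≠ ⊤) :
    ∃ U' : Submodule k V, (∀ g, U' ≤ U'.comap (ρ g)) ∧ U ≤ U' ∧
      finrank k U' = finrank k U + 1 := by
  have : Nontrivial (V ⧸ U) := Submodule.Quotient.nontrivial_iff.mpr hUtop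
  obtain ⟨w, hw0, hw⟩ := exists_common_eigenvector (hρ.quotient U hU)
  obtain ⟨v, rfl⟩ := U.mkQ_surjective w
  have hvU : v ∉ U := fun h => hw0 ((Submodule.Quotient.mk_eq_zero U).mpr h)
  have hU' : U ⊔ Submodule.span k {v} = (Submodule.span k {U.mkQ v}).comap U.mkQ := by
    rw [← Submodule.comap_map_mkQ, Submodule.map_span, image_singleton]
  refine ⟨U ⊔ Submodule.span k {v}, fun g x hx => ?_, le_sup_left,
    Submodule.finrank_sup_span_singleton hvU⟩
  rw [hU', Submodule.mem_comap, Submodule.mem_span_singleton] at hx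
  rw [hU', Submodule.mem_comap, Submodule.mem_comap, Submodule.mem_span_singleton]
  obtain ⟨a, ha⟩ := hx
  obtain ⟨c, hc⟩ := hw g
  exact ⟨a * c, by rw [mul_smul, ← hc, ← map_smul, ha]; rfl⟩

end LieKolchin

end Representation

namespace Matrix.GeneralLinearGroup

variable (ι k : Type*) [Fintype ι] [DecidableEq ι] [CommRing k]

def mulVecRep : Representation k (GL ι k) (ι → k) :=
  (Matrix.toLinAlgEquiv' : Matrix ι ι k ≃ₐ[k] Module.End k (ι → k)).toMonoidHom.comp
    (Units.coeHom _)

variable {ι k}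

@[simp]
theorem mulVecRep_apply (g : GL ι k) (v : ι → k) : mulVecRep ι k g v = (g : Matrix ι ι k) *ᵥ v :=
  rfl

theorem continuousMatrixCoeffs_mulVecRep [TopologicalSpace k] [IsTopologicalRing k] :
    (mulVecRep ι k).ContinuousMatrixCoeffs := fun v φ => by
  simp only [mulVecRep_apply]
  exact (LinearMap.continuous_on_pi φ).comp (Units.continuous_val.matrix_mulVec continuous_const)

end Matrix.GeneralLinearGroup

theorem lie_flag_for_connected_solvable (n : ℕ) (G : Subgroup (GL (Fin n) ℂ))
    (hconn : IsConnected (G : Set (GL (Fin n) ℂ))) (hsolv : IsSolvable G) :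
    (∃ V : Fin (n + 1) → Submodule ℂ (Fin n → ℂ),
        Monotone V ∧ (∀ j, Module.finrank ℂ (V j) = (j : ℕ)) ∧
        (∀ g ∈ G, ∀ j, ∀ v ∈ V j, (g : Matrix (Fin n) (Fin n) ℂ).mulVec v ∈ V j)) ∧
    (∀ V : Fin (n + 1) → Submodule ℂ (Fin n → ℂ),
        Monotone V → (∀ j, Module.finrank ℂ (V j) = (j : ℕ)) →
        (∀ g ∈ G, ∀ j, ∀ v ∈ V j, (g : Matrix (Fin n) (Fin n) ℂ).mulVec v ∈ V j) →
        ∀ g ∈ commutator G, ∀ j : Fin n, ∀ v ∈ V j.succ,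
          ((g : GL (Fin n) ℂ) : Matrix (Fin n) (Fin n) ℂ).mulVec v - v ∈ V j.castSucc) := by
  have : ConnectedSpace G := isConnected_iff_connectedSpace.mp hconn
  have : Group.IsSolvable G := hsolv
  set ρ := (Matrix.GeneralLinearGroup.mulVecRep (Fin n) ℂ).comp G.subtype
  have hρ : Representation.ContinuousMatrixCoeffs ρ :=
    Matrix.GeneralLinearGroup.continuousMatrixCoeffs_mulVecRep.comp_subtype G
  have hinv : ∀ U : Submodule ℂ (Fin n → ℂ), (∀ g ∈ G, ∀ v ∈ U, (g : Matrix _ _ ℂ).mulVec v ∈ U) ↔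
      ∀ g, U ≤ U.comap (ρ g) :=
    fun U => ⟨fun h g v hv => h g g.2 v hv, fun h g hg v hv => h ⟨g, hg⟩ hv⟩
  refine ⟨?_, fun V hmono hrank hV g hg j v hv => ?_⟩
  · obtain ⟨F, hmono, hrank, hF⟩ := Submodule.exists_monotone_flag
      (fun U => ∀ g, U ≤ U.comap (ρ g)) (fun _ => bot_le)
      (fun _ hU hUtop => Representation.exists_invariant_finrank_succ hρ hU hUtop)
      (Module.finrank_fin_fun ℂ)
    exact ⟨F, hmono, hrank, fun g hg j => (hinv _).mpr (hF j) g hg⟩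
  · have hVinv : ∀ j, ∀ g, V j ≤ (V j).comap (ρ g) := fun j => (hinv _).mp fun g hg => hV g hg j
    exact Representation.sub_mem_of_mem_commutator ρ (hVinv _) (hVinv _)
      (hmono (Fin.castSucc_le_succ j)) (by simp [hrank]) hg hv
end

section
/- If U is an open normal subgroup of finite index in a topological group G, then KO(U) = KO(G). -/
/-!
Inducing a continuous representation `σ` of the open subgroup `U` of finite index gives a
continuous finite-dimensional representation of `G`; its diagonal block at the trivial coset is,
up to conjugation inside `U`, the extension of `σ` by zero outside `U`. So if `g ∈ KO G`, this
extension takes the value `1` at `g` for every `σ`: for the trivial `σ` this forces `g ∈ U`, and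
then `σ g = 1`. The reverse inclusion is restriction of representations from `G` to `U`.
-/

def KO (G : Type*) [Group G] [TopologicalSpace G] : Subgroup G :=
  ⨅ (n : ℕ) (ρ : G →* GL (Fin n) ℂ) (_ : Continuous ρ), ρ.ker

section KO

variable {G : Type*} [Group G] [TopologicalSpace G]

lemma mem_KO_iff {g : G} :
    g ∈ KO G ↔ ∀ (n : ℕ) (ρ : G →* GL (Fin n) ℂ), Continuous ρ → ρ g = 1 := by
  simp only [KO, Subgroup.mem_iInf, MonoidHom.mem_ker]

lemma map_eq_one_of_mem_KO {ι : Type*} [Fintype ι] [DecidableEq ι] {ρ : G →* GL ι ℂ}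
    (hρ : Continuous ρ) {g : G} (hg : g ∈ KO G) : ρ g = 1 := by
  let e := Fintype.equivFin ι
  let r := (Matrix.reindexAlgEquiv ℂ ℂ e).toMonoidHom
  have hr : Continuous r := continuous_id.matrix_reindex e e
  refine Units.map_injective (f := r) (Matrix.reindexAlgEquiv ℂ ℂ e).injective ?_
  simpa using mem_KO_iff.1 hg _ ((Units.map r).comp ρ) ((hr.units_map r).comp hρ)

lemma map_KO_le {H : Type*} [Group H] [TopologicalSpace H] (f : H →* G) (hf : Continuous f) :
    (KO H).map f ≤ KO G := by
  rintro _ ⟨h, hh, rfl⟩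
  exact mem_KO_iff.2 fun n ρ hρ => mem_KO_iff.1 hh n (ρ.comp f) (hρ.comp hf)

end KO

lemma MonoidHom.continuous_toHomUnits {G M : Type*} [Group G] [TopologicalSpace G]
    [ContinuousInv G] [Monoid M] [TopologicalSpace M] (f : G →* M) (hf : Continuous f) :
    Continuous f.toHomUnits :=
  Units.continuous_iff.2 ⟨hf, by
    simpa only [← map_inv, coe_toHomUnits, Function.comp_def] using hf.comp continuous_inv⟩

lemma QuotientGroup.out_inv_mul_mul_out_mem_iff {G : Type*} [Group G] {U : Subgroup G}
    (g : G) (q r : G ⧸ U) : q.out⁻¹ * g * r.out ∈ U ↔ g • r = q := by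
  rw [mul_assoc, ← QuotientGroup.eq, QuotientGroup.out_eq', eq_comm]
  conv_rhs => rw [← QuotientGroup.out_eq' r]
  rfl

namespace MonoidHom

section ExtendByZero

variable {G M : Type*} [Group G] [MonoidWithZero M] {U : Subgroup G} (σ : U →* M)

open scoped Classical in
noncomputable def extendByZero (x : G) : M :=
  if hx : x ∈ U then σ ⟨x, hx⟩ else 0

lemma extendByZero_of_mem {x : G} (hx : x ∈ U) : σ.extendByZero x = σ ⟨x, hx⟩ := dif_pos hx

lemma extendByZero_of_notMem {x : G} (hx : x ∉ U) : σ.extendByZero x = 0 := dif_neg hx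

lemma extendByZero_one : σ.extendByZero 1 = 1 :=
  (σ.extendByZero_of_mem U.one_mem).trans σ.map_one

lemma extendByZero_mul_of_left_mem {x : G} (hx : x ∈ U) (y : G) :
    σ.extendByZero (x * y) = σ.extendByZero x * σ.extendByZero y := by
  by_cases hy : y ∈ U
  · rw [σ.extendByZero_of_mem (U.mul_mem hx hy), σ.extendByZero_of_mem hx,
      σ.extendByZero_of_mem hy, ← map_mul]
    rfl
  · rw [σ.extendByZero_of_notMem hy,
      σ.extendByZero_of_notMem ((U.mul_mem_cancel_left hx).not.2 hy), mul_zero]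

lemma extendByZero_mul_of_right_mem (x : G) {y : G} (hy : y ∈ U) :
    σ.extendByZero (x * y) = σ.extendByZero x * σ.extendByZero y := by
  by_cases hx : x ∈ U
  · exact σ.extendByZero_mul_of_left_mem hx y
  · rw [σ.extendByZero_of_notMem hx,
      σ.extendByZero_of_notMem ((U.mul_mem_cancel_right hy).not.2 hx), zero_mul]

lemma continuous_extendByZero [TopologicalSpace G] [TopologicalSpace M]
    (hU : IsClopen (U : Set G)) (hσ : Continuous σ) : Continuous σ.extendByZero := by
  refine continuous_iff_continuousAt.2 fun x => ?_
  by_cases hx : x ∈ U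
  · rw [← hU.isOpen.isOpenEmbedding_subtypeVal.continuousAt_iff (x := ⟨x, hx⟩)]
    have : σ.extendByZero ∘ Subtype.val = σ := funext fun y => σ.extendByZero_of_mem y.2
    exact this ▸ hσ.continuousAt
  · refine (continuousAt_const (y := (0 : M))).congr
      (Filter.eventuallyEq_of_mem (hU.compl.isOpen.mem_nhds hx) fun y hy => ?_)
    exact (σ.extendByZero_of_notMem hy).symm

end ExtendByZero

section Induced

variable {G ι R : Type*} [Group G] {U : Subgroup G} [Fintype (G ⧸ U)] [DecidableEq (G ⧸ U)]
  [Fintype ι] [DecidableEq ι] [Semiring R] (σ : U →* Matrix ι ι R)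

open QuotientGroup

/-- The induced representation `Ind_U^G σ` in block form, for the coset representatives
`q.out`. -/
noncomputable def inducedMatrix : G →* Matrix ((G ⧸ U) × ι) ((G ⧸ U) × ι) R where
  toFun g := Matrix.of fun p p' => σ.extendByZero (p.1.out⁻¹ * g * p'.1.out) p.2 p'.2
  map_one' := by
    ext ⟨q, i⟩ ⟨q', j⟩
    rw [Matrix.of_apply, mul_one]
    by_cases hq : q = q'
    · subst hq
      simp [σ.extendByZero_one, Matrix.one_apply]
    · rw [σ.extendByZero_of_notMem (by rwa [← mul_one q.out⁻¹, out_inv_mul_mul_out_mem_iff,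
        one_smul, eq_comm])]
      simp [hq]
  map_mul' g h := by
    ext ⟨q, i⟩ ⟨q', j⟩
    simp only [Matrix.mul_apply, Matrix.of_apply, Fintype.sum_prod_type]
    simp only [← Matrix.mul_apply]
    -- only the coset `h • q'` contributes to the block product
    rw [Finset.sum_eq_single (h • q')]
    · rw [← σ.extendByZero_mul_of_right_mem _ ((out_inv_mul_mul_out_mem_iff h _ q').2 rfl)]
      group
    · intro r _ hr
      rw [σ.extendByZero_of_notMem (x := r.out⁻¹ * h * q'.out)
        ((out_inv_mul_mul_out_mem_iff h r q').not.2 (Ne.symm hr)), mul_zero]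
      rfl
    · simp

lemma inducedMatrix_apply (g : G) (p p' : (G ⧸ U) × ι) :
    σ.inducedMatrix g p p' = σ.extendByZero (p.1.out⁻¹ * g * p'.1.out) p.2 p'.2 :=
  rfl

lemma continuous_inducedMatrix [TopologicalSpace G] [IsTopologicalGroup G] [TopologicalSpace R]
    (hU : IsOpen (U : Set G)) (hσ : Continuous σ) : Continuous σ.inducedMatrix := by
  refine continuous_matrix fun p p' => ?_
  simp only [inducedMatrix_apply]
  have hU' : IsClopen (U : Set G) := ⟨U.isClosed_of_isOpen hU, hU⟩
  exact ((σ.continuous_extendByZero hU' hσ).comp (by fun_prop)).matrix_elem p.2 p'.2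

lemma extendByZero_eq_one_of_inducedMatrix_eq_one {g : G} (hg : σ.inducedMatrix g = 1) :
    σ.extendByZero g = 1 := by
  set s := (↑(1 : G) : G ⧸ U).out
  have hs : s ∈ U := by simpa using QuotientGroup.eq.1 (out_eq' (↑(1 : G) : G ⧸ U))
  have hblock : σ.extendByZero (s⁻¹ * g * s) = 1 := by
    ext i j
    simpa [inducedMatrix_apply, Matrix.one_apply] using
      congr_fun₂ hg (↑(1 : G), i) (↑(1 : G), j)
  calc σ.extendByZero g = σ.extendByZero (s * (s⁻¹ * g * s) * s⁻¹) := by group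
    _ = σ.extendByZero s * σ.extendByZero (s⁻¹ * g * s) * σ.extendByZero s⁻¹ := by
      rw [σ.extendByZero_mul_of_right_mem _ (U.inv_mem hs), σ.extendByZero_mul_of_left_mem hs]
    _ = 1 := by
      rw [hblock, mul_one, ← σ.extendByZero_mul_of_left_mem hs, mul_inv_cancel,
        σ.extendByZero_one]

end Induced

lemma extendByZero_eq_one_of_mem_KO {G ι : Type*} [Group G] [TopologicalSpace G]
    [IsTopologicalGroup G] [Fintype ι] [DecidableEq ι] {U : Subgroup G} [Finite (G ⧸ U)]
    (hU : IsOpen (U : Set G)) {σ : U →* Matrix ι ι ℂ} (hσ : Continuous σ) {g : G}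
    (hg : g ∈ KO G) : σ.extendByZero g = 1 := by
  classical
  have := Fintype.ofFinite (G ⧸ U)
  have h := map_eq_one_of_mem_KO
    (σ.inducedMatrix.continuous_toHomUnits (σ.continuous_inducedMatrix hU hσ)) hg
  exact σ.extendByZero_eq_one_of_inducedMatrix_eq_one (Units.val_eq_one.2 h)

end MonoidHom

theorem KO_open_finiteIndex_general {G : Type*} [Group G] [TopologicalSpace G] [IsTopologicalGroup G]
    (U : Subgroup G) (hopen : IsOpen (U : Set G)) [U.FiniteIndex] :
    (KO U).map U.subtype = KO G := by
  refine le_antisymm (map_KO_le U.subtype continuous_subtype_val) fun g hg => ?_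
  have hgU : g ∈ U := by
    by_contra hgU
    have h := MonoidHom.extendByZero_eq_one_of_mem_KO hopen
      (σ := (1 : U →* Matrix (Fin 1) (Fin 1) ℂ)) continuous_const hg
    exact zero_ne_one ((MonoidHom.extendByZero_of_notMem _ hgU).symm.trans h)
  refine ⟨⟨g, hgU⟩, mem_KO_iff.2 fun n σ hσ => Units.ext ?_, rfl⟩
  have h := MonoidHom.extendByZero_eq_one_of_mem_KO hopen
    (σ := (Units.coeHom _).comp σ) (Units.continuous_val.comp hσ) hg
  rwa [MonoidHom.extendByZero_of_mem _ hgU] at h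

theorem KO_open_finiteIndex {G : Type*} [Group G] [TopologicalSpace G] [IsTopologicalGroup G]
    (U : Subgroup G) [U.Normal] (hopen : IsOpen (U : Set G)) [U.FiniteIndex] :
    (KO U).map U.subtype = KO G :=
  KO_open_finiteIndex_general U hopen
end
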